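/- arXiv:2603.12535 — 2 statements merged into one kernel-verified Lean document; each statement's English description precedes it below -/
import Mathlib

section
/- For every x ∈ {0,1}⁵ with x₁ = 0 and s ∈ {+1,−1}, one has Π_{Bb}(|φ_s⟩_x ⊗ |φ⁺⟩_{ab}) = (1/√2)|Φ_{s,x}⟩, and the 32 states |Φ_{s,x}⟩ form an orthonormal family in (ℂ²)^{⊗5} ⊗ ℂ²_a ⊗ ℂ²_b. (Step 1 of the proof of Theorem 2: Bob's measurement outcome M₁,₁ preserves orthogonality and occurs with nonzero probability on every five-qubit GHZ basis state.) -/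
noncomputable section

/-- View a coefficient function as a vector of the Euclidean (Hilbert) space. -/
def ofFun {ι : Type*} [Fintype ι] (f : ι → ℂ) : EuclideanSpace ℂ ι := WithLp.toLp 2 f

/-- Transport an endomorphism of the coefficient functions to the Euclidean space. -/
def toE {ι : Type*} [Fintype ι] (T : (ι → ℂ) →ₗ[ℂ] (ι → ℂ)) :
    Module.End ℂ (EuclideanSpace ℂ ι) :=
  (WithLp.linearEquiv 2 ℂ (ι → ℂ)).symm.toLinearMap ∘ₗ T ∘ₗ
    (WithLp.linearEquiv 2 ℂ (ι → ℂ)).toLinearMap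

open Classical in
/-- Diagonal orthogonal projection keeping exactly the basis vectors whose index
satisfies `f`. -/
def diagP {ι : Type*} [Fintype ι] (f : ι → Prop) : Module.End ℂ (EuclideanSpace ℂ ι) :=
  toE (LinearMap.pi fun i => (if f i then (1 : ℂ) else 0) • LinearMap.proj i)

/-- The linear map induced by a self-inverse permutation `σ` of the basis indices:
it sends the basis vector `|x⟩` to `|σ x⟩`. -/
def permE {ι : Type*} [Fintype ι] (σ : ι → ι) : Module.End ℂ (EuclideanSpace ℂ ι) :=
  toE (LinearMap.funLeft ℂ ℂ σ)

/-- Tensor product of two vectors, realized on the product index set. -/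
def tensE {ι κ : Type*} [Fintype ι] [Fintype κ]
    (u : EuclideanSpace ℂ ι) (w : EuclideanSpace ℂ κ) : EuclideanSpace ℂ (ι × κ) :=
  ofFun fun p => u p.1 * w p.2

/-- Bitwise complement of a bit string. -/
def bcompl {n : ℕ} (x : Fin n → Fin 2) : Fin n → Fin 2 := fun i => x i + 1

/-- The sign `+1` or `−1`, indexed by a Boolean. -/
def sgn (s : Bool) : ℂ := if s then 1 else -1

/-- Computational basis vector `|x⟩` of the `n`-qubit space. -/
def ketQ {n : ℕ} (x : Fin n → Fin 2) : EuclideanSpace ℂ (Fin n → Fin 2) :=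
  EuclideanSpace.single x 1

/-- The GHZ basis state `|ψ_s⟩_x = (|x⟩ + s|x̄⟩)/√2`. -/
def ghz {n : ℕ} (s : Bool) (x : Fin n → Fin 2) : EuclideanSpace ℂ (Fin n → Fin 2) :=
  (Real.sqrt 2 : ℂ)⁻¹ • (ketQ x + sgn s • ketQ (bcompl x))

/-- The five main qubits `A,B,C,D,E` (positions `0,1,2,3,4`) together with the two
ancilla qubits `a,b` (positions `0,1` of the second factor). -/
abbrev K5 : Type := EuclideanSpace ℂ ((Fin 5 → Fin 2) × (Fin 2 → Fin 2))

/-- Basis vector of the two ancilla qubits `a, b`. -/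
def ket2 (z : Fin 2 → Fin 2) : EuclideanSpace ℂ (Fin 2 → Fin 2) :=
  EuclideanSpace.single z 1

/-- The EPR state `|φ⁺⟩_{ab} = (|00⟩ + |11⟩)/√2` of the two ancilla qubits. -/
def phiPlus : EuclideanSpace ℂ (Fin 2 → Fin 2) :=
  ofFun fun z => if z 0 = z 1 then (Real.sqrt 2 : ℂ)⁻¹ else 0

/-- The post-measurement state
`|Φ_{s,x}⟩ = (|x⟩|x₂x₂⟩_{ab} + s|x̄⟩|x̄₂x̄₂⟩_{ab})/√2`. -/
def bigPhi (s : Bool) (x : Fin 5 → Fin 2) : K5 :=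
  (Real.sqrt 2 : ℂ)⁻¹ •
    (tensE (ketQ x) (ket2 fun _ => x 1) +
      sgn s • tensE (ketQ (bcompl x)) (ket2 fun _ => x 1 + 1))

/-- The projection `Π_{Bb} = |00⟩⟨00| + |11⟩⟨11|` on the pair `(B, b)`. -/
def projBb : Module.End ℂ K5 := diagP fun p => p.1 1 = p.2 1

/-- The projection `Π_{Aa} = |00⟩⟨00| + |11⟩⟨11|` on the pair `(A, a)`. -/
def projAa : Module.End ℂ K5 := diagP fun p => p.1 0 = p.2 0

/-- The projection `|0⟩⟨0|_A ⊗ I`. -/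
def proj0A : Module.End ℂ K5 := diagP fun p => p.1 0 = 0

/-- The CNOT gate with control the main qubit at position `c` and target the main
qubit `A` (position `0`), acting as the identity on the ancillas. -/
def cnotK (c : Fin 5) : Module.End ℂ K5 :=
  permE fun p => (Function.update p.1 0 (p.1 0 + p.1 c), p.2)

/-!
Projecting `|y⟩|φ⁺⟩_{ab}` onto `B = b` keeps only `|y⟩|y_B y_B⟩_{ab}`, with amplitude `1/√2`.
Hence `Π_{Bb}(u ⊗ φ⁺) = (1/√2) J u` for the isometry `J : |y⟩ ↦ |y⟩|y_B y_B⟩_{ab}`, and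
`|Φ_{s,x}⟩ = J|φ_s⟩_x`. Orthonormality of the `|Φ_{s,x}⟩` is thus inherited from that of the GHZ
basis, which holds because `x̄ ≠ y` whenever `x` and `y` agree in one position.
-/

open scoped ComplexConjugate

lemma inv_sqrt_two_mul_self : ((√2 : ℝ) : ℂ)⁻¹ * ((√2 : ℝ) : ℂ)⁻¹ = 2⁻¹ := by
  rw [← mul_inv, ← Complex.ofReal_mul, Real.mul_self_sqrt zero_le_two]
  norm_num

lemma conj_sgn (s : Bool) : conj (sgn s) = sgn s := by
  cases s <;> simp [sgn]

open Classical in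
lemma diagP_apply {ι : Type*} [Fintype ι] (f : ι → Prop) (v : EuclideanSpace ℂ ι) (i : ι) :
    diagP f v i = if f i then v i else 0 := by
  by_cases h : f i <;> simp [diagP, toE, h]

lemma tensE_single_single {ι κ : Type*} [Fintype ι] [Fintype κ] [DecidableEq ι] [DecidableEq κ]
    (i : ι) (j : κ) (a b : ℂ) :
    tensE (EuclideanSpace.single i a) (EuclideanSpace.single j b) =
      EuclideanSpace.single (i, j) (a * b) := by
  ext ⟨i', j'⟩
  by_cases hi : i' = i <;> by_cases hj : j' = j <;> simp [tensE, ofFun, hi, hj]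

section graph

variable {ι κ : Type*} [Fintype ι] [Fintype κ] [DecidableEq κ]

def graphLinearMap (g : ι → κ) : EuclideanSpace ℂ ι →ₗ[ℂ] EuclideanSpace ℂ (ι × κ) where
  toFun u := ofFun fun p => if p.2 = g p.1 then u p.1 else 0
  map_add' u v := by ext p; simp only [ofFun, PiLp.add_apply]; split_ifs <;> simp
  map_smul' c u := by ext p; simp only [ofFun, PiLp.smul_apply]; split_ifs <;> simp

lemma inner_graphLinearMap (g : ι → κ) (u v : EuclideanSpace ℂ ι) :
    inner ℂ (graphLinearMap g u) (graphLinearMap g v) = inner ℂ u v := by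
  simp [PiLp.inner_apply, Fintype.sum_prod_type, graphLinearMap, ofFun]

def graphIsometry (g : ι → κ) : EuclideanSpace ℂ ι →ₗᵢ[ℂ] EuclideanSpace ℂ (ι × κ) :=
  (graphLinearMap g).isometryOfInner (inner_graphLinearMap g)

lemma graphIsometry_apply (g : ι → κ) (u : EuclideanSpace ℂ ι) (p : ι × κ) :
    graphIsometry g u p = if p.2 = g p.1 then u p.1 else 0 :=
  rfl

lemma graphIsometry_single [DecidableEq ι] (g : ι → κ) (i : ι) (a : ℂ) :
    graphIsometry g (EuclideanSpace.single i a) = EuclideanSpace.single (i, g i) a := by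
  ext ⟨i', j'⟩
  by_cases hi : i' = i
  · subst hi
    by_cases hj : j' = g i' <;> simp [graphIsometry_apply, hj]
  · simp [graphIsometry_apply, hi]

end graph

section ghz

variable {n : ℕ}

lemma bcompl_apply (x : Fin n → Fin 2) (i : Fin n) : bcompl x i = x i + 1 := rfl

lemma bcompl_injective : Function.Injective (bcompl (n := n)) := fun _ _ h =>
  funext fun i => add_right_cancel (congrFun h i)

lemma bcompl_ne_of_apply_eq {x y : Fin n → Fin 2} {i : Fin n} (h : x i = y i) :
    bcompl x ≠ y := fun hxy => by
  have := congrFun hxy i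
  rw [bcompl_apply, h] at this
  omega

lemma inner_ghz (s t : Bool) {x y : Fin n → Fin 2} {i : Fin n} (hx : x i = 0) (hy : y i = 0) :
    inner ℂ (ghz s x) (ghz t y) = if s = t ∧ x = y then 1 else 0 := by
  have hcx : bcompl x ≠ y := bcompl_ne_of_apply_eq (hx.trans hy.symm)
  have hcy : x ≠ bcompl y := (bcompl_ne_of_apply_eq (hy.trans hx.symm)).symm
  simp only [ghz, ketQ, inner_smul_left, inner_smul_right, inner_add_left, inner_add_right,
    EuclideanSpace.inner_single_left, PiLp.single_apply, map_one, one_mul, conj_sgn,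
    map_inv₀, Complex.conj_ofReal, bcompl_injective.eq_iff, if_neg hcx, if_neg hcy]
  by_cases hxy : x = y
  · cases s <;> cases t <;> simp [hxy, sgn] <;> linear_combination 2 * inv_sqrt_two_mul_self
  · simp [hxy]

theorem orthonormal_ghz (i : Fin n) :
    Orthonormal ℂ (fun p : Bool × {x : Fin n → Fin 2 // x i = 0} => ghz p.1 p.2.1) := by
  rw [orthonormal_iff_ite]
  rintro ⟨s, x, hx⟩ ⟨t, y, hy⟩
  simp only [inner_ghz s t hx hy, Prod.mk.injEq, Subtype.mk.injEq]

end ghz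

/-- `|y⟩ ↦ |y⟩|y_B y_B⟩_{ab}`. -/
def copyB : EuclideanSpace ℂ (Fin 5 → Fin 2) →ₗᵢ[ℂ] K5 :=
  graphIsometry fun y _ => y 1

lemma projBb_tensE_phiPlus (u : EuclideanSpace ℂ (Fin 5 → Fin 2)) :
    projBb (tensE u phiPlus) = ((√2 : ℝ) : ℂ)⁻¹ • copyB u := by
  ext ⟨y, z⟩
  have hz : (y 1 = z 1 ∧ z 0 = z 1) ↔ z = fun _ => y 1 := by
    rw [funext_iff, Fin.forall_fin_two]
    grind
  simp only [projBb, diagP_apply, copyB, graphIsometry_apply, tensE, phiPlus, ofFun,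
    PiLp.smul_apply, smul_eq_mul, ← hz, ite_and]
  split_ifs <;> ring

lemma copyB_ghz (s : Bool) (x : Fin 5 → Fin 2) : copyB (ghz s x) = bigPhi s x := by
  simp only [copyB, ghz, bigPhi, ketQ, ket2, map_smul, map_add, graphIsometry_single,
    tensE_single_single, mul_one]
  rfl

/-- Step 1 of Theorem 2: `Π_{Bb}(|φ_s⟩_x ⊗ |φ⁺⟩_{ab}) = (1/√2)|Φ_{s,x}⟩`,
and the 32 states `|Φ_{s,x}⟩` form an orthonormal family. -/
theorem thm2_step1_orthogonality_preserving :
    (∀ (s : Bool) (x : Fin 5 → Fin 2), x 0 = 0 →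
      projBb (tensE (ghz s x) phiPlus) = (Real.sqrt 2 : ℂ)⁻¹ • bigPhi s x) ∧
    Orthonormal ℂ (fun p : Bool × {x : Fin 5 → Fin 2 // x 0 = 0} => bigPhi p.1 p.2.1) := by
  refine ⟨fun s x _ => by rw [projBb_tensE_phiPlus, copyB_ghz], ?_⟩
  simpa only [Function.comp_def, copyB_ghz] using
    (orthonormal_ghz (0 : Fin 5)).comp_linearIsometry copyB
end
end

section
/- Define T₅ : {x ∈ {0,1}⁵ : x₁ = 0} → {0,1}⁴ by T₅(x) = (x₁⊕x₂, x₁⊕x₅, x₁⊕x₂⊕x₄⊕x₅, x₁⊕x₃⊕x₄⊕x₅). For t = (t₁,t₂,t₃,t₄) ∈ {0,1}⁴ define E_t = Π^{(4)}_{t₄} ∘ CNOT_{3→1} ∘ Π^{(3)}_{t₃} ∘ CNOT_{4→1} ∘ Π^{(2)}_{t₂} ∘ CNOT_{5→1} ∘ Π^{(1)}_{t₁}, where Π^{(1)}_0 = Π_{Aa}, Π^{(2)}_0 = Π^{(4)}_0 = |0⟩⟨0|_A ⊗ I, Π^{(3)}_0 = Π_{Aa}, and subscript 1 denotes the complementary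 projection. Then for every x with x₁ = 0 and s ∈ {+1,−1}: E_t|Φ_{s,x}⟩ = CNOT_{3→1}CNOT_{4→1}CNOT_{5→1}|Φ_{s,x}⟩ if T₅(x) = t, and E_t|Φ_{s,x}⟩ = 0 otherwise; moreover T₅ is a bijection. Consequently, each outcome branch retains exactly one ± pair of the five-qubit GHZ basis. (Classification underlying Theorem 2: the five-qubit GHZ basis is locally distinguished with one EPR pair.) -/
noncomputable section

/-- The classification map
`T₅(x) = (x₁⊕x₂, x₁⊕x₅, x₁⊕x₂⊕x₄⊕x₅, x₁⊕x₃⊕x₄⊕x₅)`. -/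
def T5map (x : {x : Fin 5 → Fin 2 // x 0 = 0}) : Fin 2 × Fin 2 × Fin 2 × Fin 2 :=
  (x.1 0 + x.1 1, x.1 0 + x.1 4, x.1 0 + x.1 1 + x.1 3 + x.1 4,
    x.1 0 + x.1 2 + x.1 3 + x.1 4)

/-- From a projection `P`, the pair of complementary projections: outcome `0` is `P`,
outcome `1` is `I − P`. -/
def sel (P : Module.End ℂ K5) : Fin 2 → Module.End ℂ K5 :=
  fun b => if b = 0 then P else 1 - P

/-- The branch operator
`E_t = Π^{(4)}_{t₄} ∘ CNOT_{3→1} ∘ Π^{(3)}_{t₃} ∘ CNOT_{4→1} ∘ Π^{(2)}_{t₂} ∘ CNOT_{5→1} ∘ Π^{(1)}_{t₁}`,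
where `Π^{(1)}_0 = Π^{(3)}_0 = Π_{Aa}` and `Π^{(2)}_0 = Π^{(4)}_0 = |0⟩⟨0|_A ⊗ I`. -/
def branchOp5 (t : Fin 2 × Fin 2 × Fin 2 × Fin 2) : Module.End ℂ K5 :=
  sel proj0A t.2.2.2 * cnotK 2 * sel projAa t.2.2.1 * cnotK 3 *
    sel proj0A t.2.1 * cnotK 4 * sel projAa t.1

/-!
Every projection in `E_t` is diagonal in the computational basis and every CNOT permutes that
basis, so `E_t` sends a basis vector `|y⟩|z⟩_{ab}` either to `0` or to its image under the three
CNOTs, the latter exactly when the four parities measured along the way,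
`y₁⊕z_a`, `y₁⊕y₅`, `y₁⊕y₅⊕y₄⊕z_a`, `y₁⊕y₅⊕y₄⊕y₃`, are `t`. Each parity is a sum of an even number
of bits, so it is the same on `|x⟩|x₂x₂⟩` and on `|x̄⟩|x̄₂x̄₂⟩`, where it equals `T₅(x)`: the two
terms of `|Φ_{s,x}⟩` survive or die together. Finally `T₅` is a triangular, hence invertible,
linear system over `𝔽₂`.
-/

section BasisVectors

variable {ι : Type*} [Fintype ι]

lemma permE_permE {σ : ι → ι} (hσ : Function.Involutive σ) (v : EuclideanSpace ℂ ι) :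
    permE σ (permE σ v) = v := by
  ext j
  exact congrArg v (hσ j)

variable [DecidableEq ι]

lemma permE_single {σ : ι → ι} (hσ : Function.Involutive σ) (i : ι) (a : ℂ) :
    permE σ (EuclideanSpace.single i a) = EuclideanSpace.single (σ i) a := by
  ext j
  change EuclideanSpace.single i a (σ j) = _
  simp only [PiLp.single_apply, hσ.eq_iff]

open Classical in
lemma diagP_single (f : ι → Prop) (i : ι) (a : ℂ) :
    diagP f (EuclideanSpace.single i a) = if f i then EuclideanSpace.single i a else 0 := by
  ext j
  change (if f j then (1 : ℂ) else 0) * EuclideanSpace.single i a j = _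
  by_cases hj : j = i
  · subst hj; split_ifs <;> simp
  · split_ifs <;> simp [hj]

end BasisVectors

abbrev K5Index : Type := (Fin 5 → Fin 2) × (Fin 2 → Fin 2)

lemma sel_diagP_single (u v : K5Index → Fin 2) (b : Fin 2) (i : K5Index) (a : ℂ) :
    sel (diagP fun p => u p = v p) b (EuclideanSpace.single i a) =
      if b = u i + v i then EuclideanSpace.single i a else 0 := by
  have parity : ∀ c d : Fin 2, (0 = c + d ↔ c = d) ∧ (1 = c + d ↔ c ≠ d) := by decide
  fin_cases b <;> by_cases h : u i = v i <;> simp [sel, diagP_single, parity, h]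

lemma cnot_involutive {c : Fin 5} (hc : c ≠ 0) :
    Function.Involutive fun p : K5Index => (Function.update p.1 0 (p.1 0 + p.1 c), p.2) := by
  rintro ⟨y, z⟩
  simp only [Function.update_self, Function.update_of_ne hc, Function.update_idem,
    Prod.mk.injEq, Function.update_eq_self_iff, and_true]
  grind

lemma cnotK_single {c : Fin 5} (hc : c ≠ 0) (y : Fin 5 → Fin 2) (z : Fin 2 → Fin 2) (a : ℂ) :
    cnotK c (EuclideanSpace.single (y, z) a) =
      EuclideanSpace.single (Function.update y 0 (y 0 + y c), z) a :=
  permE_single (cnot_involutive hc) _ _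

lemma cnotK_cnotK {c : Fin 5} (hc : c ≠ 0) (v : K5) : cnotK c (cnotK c v) = v :=
  permE_permE (cnot_involutive hc) v

lemma cnotK_ne_zero {c : Fin 5} (hc : c ≠ 0) {v : K5} (hv : v ≠ 0) : cnotK c v ≠ 0 :=
  fun h => hv (by simpa [cnotK_cnotK hc] using congrArg (cnotK c) h)

/-- The parities measured by the four projections of `E_t`, each read on the state produced by
the CNOTs preceding it. -/
def branchOutcome (y : Fin 5 → Fin 2) (z : Fin 2 → Fin 2) : Fin 2 × Fin 2 × Fin 2 × Fin 2 :=
  (y 0 + z 0, y 0 + y 4, y 0 + y 4 + y 3 + z 0, y 0 + y 4 + y 3 + y 2)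

lemma branchOp5_single (t : Fin 2 × Fin 2 × Fin 2 × Fin 2) (y : Fin 5 → Fin 2)
    (z : Fin 2 → Fin 2) (a : ℂ) :
    branchOp5 t (EuclideanSpace.single (y, z) a) =
      if branchOutcome y z = t then cnotK 2 (cnotK 3 (cnotK 4 (EuclideanSpace.single (y, z) a)))
      else 0 := by
  obtain ⟨t₁, t₂, t₃, t₄⟩ := t
  simp only [branchOp5, projAa, proj0A, Module.End.mul_apply, sel_diagP_single,
    cnotK_single (c := 2) (by decide), cnotK_single (c := 3) (by decide),
    cnotK_single (c := 4) (by decide), apply_ite, map_zero]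
  simp only [branchOutcome, Prod.mk.injEq]
  split_ifs <;> simp_all

lemma branchOutcome_bcompl (x : Fin 5 → Fin 2) :
    branchOutcome (bcompl x) (fun _ => x 1 + 1) = branchOutcome x (fun _ => x 1) := by
  simp only [branchOutcome, bcompl, Prod.mk.injEq]
  refine ⟨?_, ?_, ?_, ?_⟩ <;> grind

lemma T5map_eq_branchOutcome (x : {x : Fin 5 → Fin 2 // x 0 = 0}) :
    T5map x = branchOutcome x.1 (fun _ => x.1 1) := by
  simp only [T5map, branchOutcome, Prod.mk.injEq, true_and]
  constructor <;> abel

lemma tensE_ketQ_ket2 (y : Fin 5 → Fin 2) (z : Fin 2 → Fin 2) :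
    tensE (ketQ y) (ket2 z) = EuclideanSpace.single (y, z) 1 := by
  ext ⟨y', z'⟩
  change ketQ y y' * ket2 z z' = _
  by_cases hy : y' = y <;> by_cases hz : z' = z <;> simp [ketQ, ket2, hy, hz]

lemma branchOp5_bigPhi (s : Bool) (x : Fin 5 → Fin 2) (t : Fin 2 × Fin 2 × Fin 2 × Fin 2) :
    branchOp5 t (bigPhi s x) =
      if branchOutcome x (fun _ => x 1) = t then cnotK 2 (cnotK 3 (cnotK 4 (bigPhi s x)))
      else 0 := by
  simp only [bigPhi, tensE_ketQ_ket2, map_smul, map_add, branchOp5_single, branchOutcome_bcompl]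
  split_ifs <;> simp

lemma bigPhi_ne_zero (s : Bool) (x : Fin 5 → Fin 2) : bigPhi s x ≠ 0 := by
  intro h
  have hx : bcompl x ≠ x := fun h' => by simpa [bcompl] using congrFun h' 0
  have := congrArg (· (x, fun _ => x 1)) h
  simp [bigPhi, tensE_ketQ_ket2, hx] at this

lemma T5map_bijective : Function.Bijective T5map := by
  refine Function.bijective_iff_has_inverse.mpr
    ⟨fun t => ⟨![0, t.1, t.1 + t.2.2.1 + t.2.2.2, t.1 + t.2.1 + t.2.2.1, t.2.1], rfl⟩, ?_, ?_⟩
  · rintro ⟨x, hx⟩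
    refine Subtype.ext (funext fun i => ?_)
    fin_cases i <;> simp [T5map, hx] <;> grind
  · rintro ⟨t₁, t₂, t₃, t₄⟩
    simp only [T5map, Prod.mk.injEq]
    refine ⟨?_, ?_, ?_, ?_⟩ <;> simp <;> grind

/-- classification underlying Theorem 2: each branch operator `E_t`
fixes (up to the three CNOTs) exactly the states `|Φ_{s,x}⟩` with `T₅(x) = t` and
annihilates all others; `T₅` is a bijection; so each outcome branch retains exactly
one `±` pair of the five-qubit GHZ basis. -/
theorem thm2_branch_classification :
    (∀ (s : Bool) (x : Fin 5 → Fin 2) (hx : x 0 = 0)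
        (t : Fin 2 × Fin 2 × Fin 2 × Fin 2),
      (T5map ⟨x, hx⟩ = t →
        branchOp5 t (bigPhi s x) = cnotK 2 (cnotK 3 (cnotK 4 (bigPhi s x)))) ∧
      (T5map ⟨x, hx⟩ ≠ t → branchOp5 t (bigPhi s x) = 0)) ∧
    Function.Bijective T5map ∧
    (∀ (s : Bool) (x : Fin 5 → Fin 2) (hx : x 0 = 0)
        (t : Fin 2 × Fin 2 × Fin 2 × Fin 2),
      branchOp5 t (bigPhi s x) ≠ 0 ↔ T5map ⟨x, hx⟩ = t) := by
  refine ⟨fun s x hx t => ?_, T5map_bijective, fun s x hx t => ?_⟩ <;>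
    rw [branchOp5_bigPhi, ← T5map_eq_branchOutcome ⟨x, hx⟩]
  · exact ⟨fun h => if_pos h, fun h => if_neg h⟩
  · split_ifs with h
    · simpa [h] using cnotK_ne_zero (by decide) (cnotK_ne_zero (by decide)
        (cnotK_ne_zero (by decide) (bigPhi_ne_zero s x)))
    · simpa using h
end
end
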